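/- Let S and T be finite types, let F = (S ⊕ T) →₀ ℤ be the free abelian group on S ⊕ T, let B = S →₀ ℤ be the free abelian group on S, and let π : F →+ B be the projection sending each basis element of S to itself and each basis element of T to 0. Let B⁰ be a subgroup of B, let u : B⁰ →+ F be a group homomorphism such that π(u(b)) = b for every b ∈ B⁰, and let N be a subgroup of F containing the image of u. Then rank(F ⧸ N) ≤ rank(B ⧸ B⁰) + card(T). -/

import Mathlib

/-- Let `S` and `T` be finite types, `F = (S ⊕ T) →₀ ℤ` the free abelian group on `S ⊕ T`,
`B = S →₀ ℤ` the free abelian group on `S`, and `π : F →+ B` the projection sending each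
basis element of `S` to itself and each basis element of `T` to `0`.  Let `B⁰` be a subgroup
of `B`, let `u : B⁰ →+ F` be a homomorphism with `π (u b) = b` for all `b ∈ B⁰`, and let
`N` be a subgroup of `F` containing the image of `u`.  Then
`rank (F ⧸ N) ≤ rank (B ⧸ B⁰) + card T`. -/
theorem rank_quotient_le_rank_quotient_add_card
    (S T : Type) [Fintype S] [Fintype T]
    (π : ((S ⊕ T) →₀ ℤ) →+ (S →₀ ℤ))
    (hπS : ∀ s : S, π (Finsupp.single (Sum.inl s) 1) = Finsupp.single s 1)
    (hπT : ∀ t : T, π (Finsupp.single (Sum.inr t) 1) = 0)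
    (B₀ : AddSubgroup (S →₀ ℤ))
    (u : B₀ →+ ((S ⊕ T) →₀ ℤ))
    (hu : ∀ b : B₀, π (u b) = (b : S →₀ ℤ))
    (N : AddSubgroup ((S ⊕ T) →₀ ℤ))
    (hN : u.range ≤ N) :
    Module.rank ℤ (((S ⊕ T) →₀ ℤ) ⧸ N) ≤
      Module.rank ℤ ((S →₀ ℤ) ⧸ B₀) + Fintype.card T := by
  classical
  let π' : ((S ⊕ T) →₀ ℤ) →ₗ[ℤ] (S →₀ ℤ) := π.toIntLinearMap
  let Nₛ : Submodule ℤ ((S ⊕ T) →₀ ℤ) := N.toIntSubmodule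
  let B₀ₛ : Submodule ℤ (S →₀ ℤ) := B₀.toIntSubmodule
  have e₁ : Module.rank ℤ ((((S ⊕ T) →₀ ℤ)) ⧸ N)
      = Module.rank ℤ ((((S ⊕ T) →₀ ℤ)) ⧸ Nₛ) :=
    ((AddEquiv.refl _ : ((((S ⊕ T) →₀ ℤ)) ⧸ N) ≃+
      ((((S ⊕ T) →₀ ℤ)) ⧸ Nₛ)).toIntLinearEquiv).rank_eq
  have e₂ : Module.rank ℤ ((S →₀ ℤ) ⧸ B₀) = Module.rank ℤ ((S →₀ ℤ) ⧸ B₀ₛ) :=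
    ((AddEquiv.refl _ : ((S →₀ ℤ) ⧸ B₀) ≃+ ((S →₀ ℤ) ⧸ B₀ₛ)).toIntLinearEquiv).rank_eq
  -- the image of u as a submodule
  let N₁ : Submodule ℤ ((S ⊕ T) →₀ ℤ) := LinearMap.range u.toIntLinearMap
  have hN₁N : N₁ ≤ Nₛ := by rintro x ⟨b, rfl⟩; exact hN ⟨b, rfl⟩
  have hπN₁ : N₁ ≤ B₀ₛ.comap π' := by
    rintro x ⟨b, rfl⟩
    simp only [Submodule.mem_comap]
    show π (u b) ∈ B₀ₛ
    rw [hu b]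
    exact b.2
  -- π is surjective
  have hπsurj : Function.Surjective π' := by
    intro b
    induction b using Finsupp.induction_linear with
    | zero => exact ⟨0, map_zero _⟩
    | add f g hf hg =>
      obtain ⟨x, hx⟩ := hf; obtain ⟨y, hy⟩ := hg
      exact ⟨x + y, by simp [hx, hy]⟩
    | single s n =>
      refine ⟨Finsupp.single (Sum.inl s) n, ?_⟩
      rw [show Finsupp.single (Sum.inl s) n = n • Finsupp.single (Sum.inl s) (1 : ℤ) by
        simp [Finsupp.smul_single, smul_eq_mul], map_smul]
      show n • π (Finsupp.single (Sum.inl s) 1) = Finsupp.single s n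
      rw [hπS s]
      simp [Finsupp.smul_single, smul_eq_mul]
  -- the induced map on quotients
  let πq : ((((S ⊕ T) →₀ ℤ)) ⧸ N₁) →ₗ[ℤ] ((S →₀ ℤ) ⧸ B₀ₛ) :=
    Submodule.mapQ N₁ B₀ₛ π' hπN₁
  have hπq_surj : Function.Surjective πq := by
    intro y
    obtain ⟨b, rfl⟩ := Submodule.Quotient.mk_surjective _ y
    obtain ⟨x, rfl⟩ := hπsurj b
    exact ⟨Submodule.Quotient.mk x, by simp [πq, Submodule.mapQ_apply]⟩
  -- bound the kernel of πq by the kernel of π'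
  have hker : Module.rank ℤ (LinearMap.ker πq) ≤ Module.rank ℤ (LinearMap.ker π') := by
    let g : LinearMap.ker π' →ₗ[ℤ] LinearMap.ker πq :=
      LinearMap.codRestrict _ ((N₁.mkQ).comp (LinearMap.ker π').subtype) (fun x => by
        have hx : π' (x : ((S ⊕ T) →₀ ℤ)) = 0 := x.2
        simp [πq, LinearMap.mem_ker, Submodule.mapQ_apply, hx])
    refine LinearMap.rank_le_of_surjective g ?_
    rintro ⟨y, hy⟩
    obtain ⟨x, rfl⟩ := Submodule.Quotient.mk_surjective N₁ y
    have hx : π' x ∈ B₀ₛ := by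
      rw [LinearMap.mem_ker, Submodule.mapQ_apply, Submodule.Quotient.mk_eq_zero] at hy
      exact hy
    have hm : u ⟨π' x, hx⟩ ∈ N₁ := LinearMap.mem_range.mpr ⟨⟨π' x, hx⟩, rfl⟩
    refine ⟨⟨x - u ⟨π' x, hx⟩, ?_⟩, ?_⟩
    · rw [LinearMap.mem_ker, map_sub]
      have h1 : π' (u ⟨π' x, hx⟩) = π' x := hu ⟨π' x, hx⟩
      rw [h1, sub_self]
    · apply Subtype.ext
      show N₁.mkQ (x - u ⟨π' x, hx⟩) = Submodule.Quotient.mk x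
      rw [Submodule.mkQ_apply, Submodule.Quotient.eq]
      simpa using neg_mem hm
  -- rank of the kernel of π'
  have hrankF : Module.rank ℤ ((S ⊕ T) →₀ ℤ)
      = (Fintype.card S : Cardinal) + Fintype.card T := by
    simp [rank_finsupp_self', Cardinal.mk_sum, Cardinal.mk_fintype]
  have hrange : Module.rank ℤ (LinearMap.range π') = Fintype.card S := by
    rw [LinearMap.range_eq_top.2 hπsurj, rank_top]
    simp [rank_finsupp_self', Cardinal.mk_fintype]
  have hkerπ' : Module.rank ℤ (LinearMap.ker π') = Fintype.card T := by
    have h := LinearMap.rank_range_add_rank_ker π'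
    rw [hrange, hrankF] at h
    exact Cardinal.eq_of_add_eq_add_left h (Cardinal.nat_lt_aleph0 _)
  -- assemble
  have step1 : Module.rank ℤ ((((S ⊕ T) →₀ ℤ)) ⧸ Nₛ)
      ≤ Module.rank ℤ ((((S ⊕ T) →₀ ℤ)) ⧸ N₁) := by
    refine LinearMap.rank_le_of_surjective
      (Submodule.mapQ N₁ Nₛ LinearMap.id (by simpa using hN₁N)) ?_
    intro y
    obtain ⟨x, rfl⟩ := Submodule.Quotient.mk_surjective _ y
    exact ⟨Submodule.Quotient.mk x, by simp [Submodule.mapQ_apply]⟩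
  have step2 : Module.rank ℤ ((((S ⊕ T) →₀ ℤ)) ⧸ N₁)
      = Module.rank ℤ ((S →₀ ℤ) ⧸ B₀ₛ) + Module.rank ℤ (LinearMap.ker πq) :=
    LinearMap.rank_eq_of_surjective hπq_surj
  calc Module.rank ℤ ((((S ⊕ T) →₀ ℤ)) ⧸ N)
      = Module.rank ℤ ((((S ⊕ T) →₀ ℤ)) ⧸ Nₛ) := e₁
    _ ≤ Module.rank ℤ ((((S ⊕ T) →₀ ℤ)) ⧸ N₁) := step1
    _ = Module.rank ℤ ((S →₀ ℤ) ⧸ B₀ₛ) + Module.rank ℤ (LinearMap.ker πq) := step2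
    _ ≤ Module.rank ℤ ((S →₀ ℤ) ⧸ B₀ₛ) + Fintype.card T :=
        add_le_add_right (hker.trans_eq hkerπ') _
    _ = Module.rank ℤ ((S →₀ ℤ) ⧸ B₀) + Fintype.card T := by rw [e₂]
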